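/- arXiv:2105.04304 — 3 statements merged into one kernel-verified Lean document; each statement's English description precedes it below -/
import Mathlib

section
/- Let G ∈ ℂ^{M×M} be a Hermitian matrix with positive real diagonal entries normalized so that ∑_i G_{ii} = 1, and let μ := max_{i≠j} |G_{ij}| / √(G_{ii} G_{jj}) (assume M ≥ 2). If G_{ii} > μ for every i = 1,...,M, then G is strictly diagonally dominant: for every i, ∑_{j≠i} |G_{ij}| < G_{ii}. -/
open Finset

/-!
For `i ≠ j` the coherence bound gives `‖G i j‖ ≤ μ √(G i i · G j j)`, and since `μ` lies below
both diagonal entries it lies below their geometric mean, so `‖G i j‖ ≤ G i i · G j j`.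
Summing over `j ≠ i` and using the trace normalization,
`∑_{j ≠ i} ‖G i j‖ ≤ G i i (1 - G i i) < G i i`.
-/

theorem Real.min_le_sqrt_mul {a b : ℝ} (ha : 0 ≤ a) (hb : 0 ≤ b) : min a b ≤ √(a * b) :=
  Real.le_sqrt_of_sq_le <| by
    rw [sq]
    exact mul_le_mul (min_le_left a b) (min_le_right a b) (le_min ha hb) ha

theorem le_mul_of_div_sqrt_mul_le {x μ a b : ℝ} (ha : 0 < a) (hb : 0 < b)
    (hx : x / √(a * b) ≤ μ) (hμ : μ ≤ min a b) : x ≤ a * b := by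
  have hab : 0 < √(a * b) := Real.sqrt_pos.mpr (mul_pos ha hb)
  calc x ≤ μ * √(a * b) := (div_le_iff₀ hab).mp hx
    _ ≤ √(a * b) * √(a * b) :=
      mul_le_mul_of_nonneg_right (hμ.trans (Real.min_le_sqrt_mul ha.le hb.le)) hab.le
    _ = a * b := Real.mul_self_sqrt (mul_pos ha hb).le

theorem sum_erase_lt_of_le_mul {ι : Type*} [Fintype ι] [DecidableEq ι] {d f : ι → ℝ}
    (hsum : ∑ j, d j = 1) {i : ι} (hi : 0 < d i) (hf : ∀ j ≠ i, f j ≤ d i * d j) :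
    ∑ j ∈ univ.erase i, f j < d i :=
  calc ∑ j ∈ univ.erase i, f j ≤ ∑ j ∈ univ.erase i, d i * d j :=
        sum_le_sum fun j hj => hf j (ne_of_mem_erase hj)
    _ = d i * (1 - d i) := by rw [← mul_sum, sum_erase_eq_sub (mem_univ i), hsum]
    _ < d i := by nlinarith

theorem coherence_implies_diagonal_dominance_general {M : ℕ}
    (G : Matrix (Fin M) (Fin M) ℂ)
    (hpos : ∀ i, 0 < (G i i).re)
    (htrace : ∑ i, (G i i).re = 1)
    (μ : ℝ)
    (hμ : IsGreatest {r : ℝ | ∃ i j : Fin M, i ≠ j ∧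
      r = ‖G i j‖ / Real.sqrt ((G i i).re * (G j j).re)} μ)
    (hdom : ∀ i, μ < (G i i).re) :
    ∀ i, ∑ j ∈ Finset.univ.erase i, ‖G i j‖ < (G i i).re := by
  intro i
  refine sum_erase_lt_of_le_mul htrace (hpos i) fun j hji => ?_
  exact le_mul_of_div_sqrt_mul_le (hpos i) (hpos j) (hμ.2 ⟨i, j, hji.symm, rfl⟩)
    (le_min (hdom i).le (hdom j).le)

/-- If `G` is a Hermitian matrix with positive real diagonal entries normalized to
trace one, and the mutual coherence `μ = max_{i≠j} |G i j| / √(G i i · G j j)` satisfies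
`μ < G i i` for every `i`, then `G` is strictly diagonally dominant. -/
theorem coherence_implies_diagonal_dominance {M : ℕ} (hM : 2 ≤ M)
    (G : Matrix (Fin M) (Fin M) ℂ) (hherm : G.IsHermitian)
    (hpos : ∀ i, 0 < (G i i).re)
    (htrace : ∑ i, (G i i).re = 1)
    (μ : ℝ)
    (hμ : IsGreatest {r : ℝ | ∃ i j : Fin M, i ≠ j ∧
      r = ‖G i j‖ / Real.sqrt ((G i i).re * (G j j).re)} μ)
    (hdom : ∀ i, μ < (G i i).re) :
    ∀ i, ∑ j ∈ Finset.univ.erase i, ‖G i j‖ < (G i i).re :=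
  coherence_implies_diagonal_dominance_general G hpos htrace μ hμ hdom
end

section
/- (Shortest-path concatenation inequality.) Let g be a directed graph with a distinguished set M of 'middle' nodes, and suppose every path from a node a to a node a' factors through M as a concatenation α ∘ β' where α goes from a to some z ∈ M and β goes from (the original node corresponding to) a' to z. Let d(a,a'), d(b,b'), d(a,b') denote the lengths of shortest such concatenated paths (assumed to exist). Then (d(a,a') + d(b,b'))/2 ≤ d(a,b'). -/
/-!
A shortest path `α ∘ β'` from `a` to `b'` passes through a middle node `z`, with `α` from `a`
to `z` and `β` from `b` to `z`. Then `α ∘ α'` and `β ∘ β'` are paths through the same `z`,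
from `a` to `a'` and from `b` to `b'`, of lengths `2 len α` and `2 len β`; their sum is
`2 d(a, b')`, which therefore bounds `d(a, a') + d(b, b')`.
-/

/-- With `L x z` the lengths of paths from `x` to the middle node `z`, these are the lengths of
the paths from `x` to `y'` in the concatenated graph. -/
def concatPathLengths {V M : Type*} [Add M] (Mid : Set V) (L : V → V → Set M) (x y : V) :
    Set M :=
  {n | ∃ z ∈ Mid, ∃ p ∈ L x z, ∃ q ∈ L y z, n = p + q}

theorem add_le_two_nsmul_of_mem_concatPathLengths {V M : Type*} [AddCommMonoid M]
    [PartialOrder M] [IsOrderedAddMonoid M] {Mid : Set V} {L : V → V → Set M} {a b : V}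
    {daa dbb n : M} (hdaa : daa ∈ lowerBounds (concatPathLengths Mid L a a))
    (hdbb : dbb ∈ lowerBounds (concatPathLengths Mid L b b))
    (hn : n ∈ concatPathLengths Mid L a b) :
    daa + dbb ≤ 2 • n := by
  obtain ⟨z, hz, p, hp, q, hq, rfl⟩ := hn
  calc daa + dbb ≤ (p + p) + (q + q) :=
        add_le_add (hdaa ⟨z, hz, p, hp, p, hp, rfl⟩) (hdbb ⟨z, hz, q, hq, q, hq, rfl⟩)
    _ = 2 • (p + q) := by rw [two_nsmul, add_add_add_comm]

/-- Shortest-path concatenation inequality in a concatenated gammoid `Γ ∘ Γ'`: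
if `L x z` denotes the set of lengths of paths from `x` to the middle node `z`, and
the shortest concatenated-path distances `d(a,a')`, `d(b,b')`, `d(a,b')` exist (each
being the least value of `p + q` over middle nodes `z` and path lengths `p`, `q` into
`z`), then `(d(a,a') + d(b,b')) / 2 ≤ d(a,b')`. -/
theorem shortest_path_concat_inequality {V : Type*} (Mid : Set V)
    (L : V → V → Set ℕ) (a b : V) (daa dbb dab : ℕ)
    (hdaa : IsLeast {n : ℕ | ∃ z ∈ Mid, ∃ p ∈ L a z, ∃ q ∈ L a z, n = p + q} daa)
    (hdbb : IsLeast {n : ℕ | ∃ z ∈ Mid, ∃ p ∈ L b z, ∃ q ∈ L b z, n = p + q} dbb)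
    (hdab : IsLeast {n : ℕ | ∃ z ∈ Mid, ∃ p ∈ L a z, ∃ q ∈ L b z, n = p + q} dab) :
    ((daa : ℝ) + dbb) / 2 ≤ dab := by
  have key : daa + dbb ≤ 2 * dab := by
    simpa only [smul_eq_mul] using
      add_le_two_nsmul_of_mem_concatPathLengths (Mid := Mid) hdaa.2 hdbb.2 hdab.1
  rw [div_le_iff₀ two_pos, mul_comm]
  exact_mod_cast key
end

section
/- (ℓ2 error bound for ℓ1-minimizers.) Under the setting of the previous statement, with additionally Λ := Λ_0 ∪ Λ_1 where Λ_1 corresponds to the k largest components of w restricted to Λ_0^c, the error satisfies ‖w‖_2 ≤ 2‖w_Λ‖_2 + 2·σ_k(v)_1/√k. -/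
/-!
Write `w = u - v`, `Λ = Λ₀ ∪ Λ₁`. The ℓ² mass of `w` off `Λ` is controlled by its ℓ¹ mass on
`Λ₀ᶜ`: every component outside `Λ₁` is at most the average of the `k` components on `Λ₁`, so
`4k ‖w_{Λᶜ}‖₂² ≤ 4 ‖w_{Λ₁}‖₁ ‖w_{Λᶜ}‖₁ ≤ ‖w_{Λ₀ᶜ}‖₁²`. The ℓ¹-minimality `‖u‖₁ ≤ ‖v‖₁` gives the
cone condition `‖w_{Λ₀ᶜ}‖₁ ≤ ‖w_{Λ₀}‖₁ + 2σ_k(v)₁`, and Cauchy–Schwarz turns `‖w_{Λ₀}‖₁` into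
`√k ‖w_{Λ₀}‖₂ ≤ √k ‖w_Λ‖₂`.
-/

open Finset

theorem Real.sqrt_add_le_add_sqrt {x y : ℝ} (hx : 0 ≤ x) (hy : 0 ≤ y) : √(x + y) ≤ √x + √y :=
  Real.sqrt_le_iff.2 ⟨by positivity, by
    nlinarith [Real.sq_sqrt hx, Real.sq_sqrt hy, Real.sqrt_nonneg x, Real.sqrt_nonneg y]⟩

theorem Finset.sum_le_sqrt_card_mul_sqrt_sum_sq {ι : Type*} (s : Finset ι) (f : ι → ℝ) :
    ∑ i ∈ s, f i ≤ √(#s : ℝ) * √(∑ i ∈ s, f i ^ 2) := by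
  rw [← Real.sqrt_mul (Nat.cast_nonneg _)]
  exact (le_abs_self _).trans (Real.abs_le_sqrt (sq_sum_le_card_mul_sum_sq))

theorem sum_compl_norm_sub_le_of_sum_norm_le {ι : Type*} [Fintype ι] [DecidableEq ι]
    {E : ι → Type*} [∀ i, SeminormedAddCommGroup (E i)] {u v : ∀ i, E i}
    (h : ∑ i, ‖u i‖ ≤ ∑ i, ‖v i‖) (s : Finset ι) :
    ∑ i ∈ sᶜ, ‖u i - v i‖ ≤ ∑ i ∈ s, ‖u i - v i‖ + 2 * ∑ i ∈ sᶜ, ‖v i‖ := by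
  have hs : ∑ i ∈ s, ‖v i‖ ≤ ∑ i ∈ s, ‖u i‖ + ∑ i ∈ s, ‖u i - v i‖ := by
    rw [← sum_add_distrib]
    exact sum_le_sum fun i _ => norm_le_norm_add_norm_sub (u i) (v i)
  have hsc : ∑ i ∈ sᶜ, ‖u i - v i‖ ≤ ∑ i ∈ sᶜ, ‖u i‖ + ∑ i ∈ sᶜ, ‖v i‖ := by
    rw [← sum_add_distrib]
    exact sum_le_sum fun i _ => norm_sub_le (u i) (v i)
  rw [← sum_add_sum_compl s, ← sum_add_sum_compl s (fun i => ‖v i‖)] at h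
  linarith

section TopBlock

variable {ι : Type*} {a : ι → ℝ}

theorem card_mul_sum_sq_le_sum_mul_sum {t r : Finset ι} (ha : ∀ j ∈ r, 0 ≤ a j)
    (hmax : ∀ i ∈ t, ∀ j ∈ r, a j ≤ a i) :
    #t * ∑ j ∈ r, a j ^ 2 ≤ (∑ i ∈ t, a i) * ∑ j ∈ r, a j := by
  rw [mul_sum, mul_sum]
  refine sum_le_sum fun j hj => ?_
  have hj_le : #t * a j ≤ ∑ i ∈ t, a i := by
    simpa only [nsmul_eq_mul] using card_nsmul_le_sum t a (a j) fun i hi => hmax i hi j hj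
  rw [sq, ← mul_assoc]
  exact mul_le_mul_of_nonneg_right hj_le (ha j hj)

variable [DecidableEq ι]

theorem two_mul_sqrt_mul_sqrt_sum_sdiff_sq_le_sum {s t : Finset ι} {k : ℕ}
    (ha : ∀ i ∈ s, 0 ≤ a i) (hts : t ⊆ s) (hcard : #t = min k #s)
    (hmax : ∀ i ∈ t, ∀ j ∈ s \ t, a j ≤ a i) :
    2 * √k * √(∑ j ∈ s \ t, a j ^ 2) ≤ ∑ i ∈ s, a i := by
  have hsum_nonneg : 0 ≤ ∑ i ∈ s, a i := sum_nonneg ha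
  rcases le_or_gt k #s with hks | hsk
  · have hsq : 4 * k * ∑ j ∈ s \ t, a j ^ 2 ≤ (∑ i ∈ s, a i) ^ 2 := by
      have hblock := card_mul_sum_sq_le_sum_mul_sum
        (fun j hj => ha j (sdiff_subset hj)) hmax
      rw [hcard, min_eq_left hks] at hblock
      rw [← sum_sdiff hts]
      nlinarith [sq_nonneg (∑ j ∈ s \ t, a j - ∑ i ∈ t, a i)]
    rw [← pow_le_pow_iff_left₀ (by positivity) hsum_nonneg two_ne_zero, mul_pow, mul_pow,
      Real.sq_sqrt (Nat.cast_nonneg _), Real.sq_sqrt (sum_nonneg fun _ _ => sq_nonneg _)]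
    linarith
  · have hts_eq : t = s := eq_of_subset_of_card_le hts (by omega)
    simpa [hts_eq] using hsum_nonneg

end TopBlock

theorem l2_error_bound_l1_minimizer_general {N : ℕ} {E : Fin N → Type*}
    [∀ i, NormedAddCommGroup (E i)] (u v : ∀ i, E i)
    (h1 : ∑ i, ‖u i‖ ≤ ∑ i, ‖v i‖) (k : ℕ) (hk : 0 < k)
    (Λ₀ : Finset (Fin N)) (hcard0 : Λ₀.card = k)
    (Λ₁ : Finset (Fin N)) (hsub : Λ₁ ⊆ Λ₀ᶜ)
    (hcard1 : Λ₁.card = min k Λ₀ᶜ.card)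
    (hmax1 : ∀ i ∈ Λ₁, ∀ j ∈ Λ₀ᶜ \ Λ₁, ‖u j - v j‖ ≤ ‖u i - v i‖) :
    Real.sqrt (∑ i, ‖u i - v i‖ ^ 2)
      ≤ 2 * Real.sqrt (∑ i ∈ Λ₀ ∪ Λ₁, ‖u i - v i‖ ^ 2)
        + 2 * (∑ i ∈ Λ₀ᶜ, ‖v i‖) / Real.sqrt k := by
  set A := √(∑ i ∈ Λ₀ ∪ Λ₁, ‖u i - v i‖ ^ 2)
  set T := √(∑ i ∈ Λ₀ᶜ \ Λ₁, ‖u i - v i‖ ^ 2)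
  have hsqrt_k : 0 < √(k : ℝ) := Real.sqrt_pos.2 (Nat.cast_pos.2 hk)
  have hsplit : √(∑ i, ‖u i - v i‖ ^ 2) ≤ A + T := by
    have hcompl : (Λ₀ ∪ Λ₁)ᶜ = Λ₀ᶜ \ Λ₁ := by rw [compl_union, sdiff_eq_inter_compl]
    rw [← sum_add_sum_compl (Λ₀ ∪ Λ₁), hcompl]
    exact Real.sqrt_add_le_add_sqrt (by positivity) (by positivity)
  have htail := two_mul_sqrt_mul_sqrt_sum_sdiff_sq_le_sum (fun _ _ => norm_nonneg _)
    hsub hcard1 hmax1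
  have hcone := sum_compl_norm_sub_le_of_sum_norm_le h1 Λ₀
  have hhead : ∑ i ∈ Λ₀, ‖u i - v i‖ ≤ √k * A := by
    refine (sum_le_sqrt_card_mul_sqrt_sum_sq Λ₀ _).trans ?_
    rw [hcard0]
    gcongr
    exact Real.sqrt_le_sqrt (sum_le_sum_of_subset_of_nonneg subset_union_left
      fun _ _ _ => sq_nonneg _)
  have hT : T ≤ A + 2 * (∑ i ∈ Λ₀ᶜ, ‖v i‖) / √k := by
    rw [← sub_le_iff_le_add', le_div_iff₀ hsqrt_k]
    nlinarith [mul_nonneg hsqrt_k.le (Real.sqrt_nonneg _ : 0 ≤ T)]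
  linarith

/-- ℓ² error bound for ℓ¹-minimizers: with `‖u‖₁ ≤ ‖v‖₁`, `w = u − v`, `Λ₀` indexing
the `k` largest component norms of `v`, `Λ₁ ⊆ Λ₀ᶜ` indexing the `k` largest component
norms of `w` on `Λ₀ᶜ`, and `Λ = Λ₀ ∪ Λ₁`, one has
`‖w‖₂ ≤ 2 ‖w_Λ‖₂ + 2 σ_k(v)₁ / √k`, where `σ_k(v)₁ = ∑_{i ∉ Λ₀} ‖v i‖`. -/
theorem l2_error_bound_l1_minimizer {N : ℕ} {E : Fin N → Type*}
    [∀ i, NormedAddCommGroup (E i)] (u v : ∀ i, E i)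
    (h1 : ∑ i, ‖u i‖ ≤ ∑ i, ‖v i‖) (k : ℕ) (hk : 0 < k)
    (Λ₀ : Finset (Fin N)) (hcard0 : Λ₀.card = k)
    (hmax0 : ∀ i ∈ Λ₀, ∀ j ∉ Λ₀, ‖v j‖ ≤ ‖v i‖)
    (Λ₁ : Finset (Fin N)) (hsub : Λ₁ ⊆ Λ₀ᶜ)
    (hcard1 : Λ₁.card = min k Λ₀ᶜ.card)
    (hmax1 : ∀ i ∈ Λ₁, ∀ j ∈ Λ₀ᶜ \ Λ₁, ‖u j - v j‖ ≤ ‖u i - v i‖) :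
    Real.sqrt (∑ i, ‖u i - v i‖ ^ 2)
      ≤ 2 * Real.sqrt (∑ i ∈ Λ₀ ∪ Λ₁, ‖u i - v i‖ ^ 2)
        + 2 * (∑ i ∈ Λ₀ᶜ, ‖v i‖) / Real.sqrt k :=
  l2_error_bound_l1_minimizer_general u v h1 k hk Λ₀ hcard0 Λ₁ hsub hcard1 hmax1
end
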